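/- Let X be a measurable space, κ a Markov kernel from X to X, and let c, u : X → [0,+∞] be measurable and w ∈ [0,+∞] be such that c(x) + ∫_X u(y) κ(x)(dy) ≤ w + u(x) for all x ∈ X. Fix x ∈ X and define probability measures μ_0 := δ_x and μ_{t+1} := bind of μ_t along κ (i.e., μ_{t+1}(B) = ∫_X κ(y)(B) μ_t(dy)). Then for every n ≥ 1, Σ_{t=0}^{n−1} ∫_X c dμ_t ≤ n·w + u(x); consequently, if u(x) < +∞, then limsup_{n→∞} (1/n) Σ_{t=0}^{n−1} ∫_X c dμ_t ≤ w. -/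

import Mathlib

/-!
Integrating the one-step inequality `c + κ u ≤ w + u` against the law `μ_t` of the chain at
time `t` gives `∫ c dμ_t + ∫ u dμ_{t+1} ≤ w + ∫ u dμ_t`. These inequalities telescope to
`∑_{t<n} ∫ c dμ_t + ∫ u dμ_n ≤ n w + u(x)`, and dropping the nonnegative last term gives the
bound. Dividing by `n`, the error term `u(x) / n` vanishes in the limit when `u(x) < ∞`.
-/

open MeasureTheory ProbabilityTheory Filter Topology
open scoped ENNReal

noncomputable section

/-- The distribution of the state at time `t` of the Markov chain with transition kernel
`κ` started at `x`: `μ_0 = δ_x` and `μ_{t+1} = μ_t.bind κ`. -/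
def chainMeas {X : Type*} [MeasurableSpace X] (κ : Kernel X X) (x : X) :
    ℕ → Measure X
  | 0 => Measure.dirac x
  | (t + 1) => (chainMeas κ x t).bind fun y => κ y

lemma lintegral_add_lintegral_bind_le {X : Type*} [MeasurableSpace X] (κ : Kernel X X)
    (μ : Measure X) [IsProbabilityMeasure μ] {c u : X → ℝ≥0∞} (hc : Measurable c)
    (hu : Measurable u) {w : ℝ≥0∞} (h : ∀ x, c x + ∫⁻ y, u y ∂κ x ≤ w + u x) :
    ∫⁻ y, c y ∂μ + ∫⁻ y, u y ∂μ.bind κ ≤ w + ∫⁻ y, u y ∂μ :=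
  calc ∫⁻ y, c y ∂μ + ∫⁻ y, u y ∂μ.bind κ
      = ∫⁻ a, c a + ∫⁻ y, u y ∂κ a ∂μ := by
        rw [Measure.lintegral_bind κ.aemeasurable hu.aemeasurable, lintegral_add_left hc]
    _ ≤ ∫⁻ a, w + u a ∂μ := lintegral_mono h
    _ = w + ∫⁻ y, u y ∂μ := by simp [lintegral_add_left measurable_const]

namespace chainMeas

variable {X : Type*} [MeasurableSpace X] (κ : Kernel X X) (x : X)

instance [IsMarkovKernel κ] (t : ℕ) : IsProbabilityMeasure (chainMeas κ x t) := by
  induction t with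
  | zero => exact Measure.dirac.isProbabilityMeasure
  | succ t _ => exact isProbabilityMeasure_bind κ.aemeasurable (.of_forall inferInstance)

lemma sum_lintegral_add_lintegral_le [IsMarkovKernel κ] {c u : X → ℝ≥0∞} (hc : Measurable c)
    (hu : Measurable u) {w : ℝ≥0∞} (h : ∀ x, c x + ∫⁻ y, u y ∂κ x ≤ w + u x) (n : ℕ) :
    ∑ t ∈ Finset.range n, ∫⁻ y, c y ∂chainMeas κ x t + ∫⁻ y, u y ∂chainMeas κ x n
      ≤ n * w + u x := by
  induction n with
  | zero => simp [chainMeas, lintegral_dirac' _ hu]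
  | succ n ih =>
    have step := lintegral_add_lintegral_bind_le κ (chainMeas κ x n) hc hu h
    calc ∑ t ∈ Finset.range (n + 1), ∫⁻ y, c y ∂chainMeas κ x t
          + ∫⁻ y, u y ∂chainMeas κ x (n + 1)
        = ∑ t ∈ Finset.range n, ∫⁻ y, c y ∂chainMeas κ x t
          + (∫⁻ y, c y ∂chainMeas κ x n + ∫⁻ y, u y ∂(chainMeas κ x n).bind κ) := by
          rw [Finset.sum_range_succ, add_assoc]; rfl
      _ ≤ ∑ t ∈ Finset.range n, ∫⁻ y, c y ∂chainMeas κ x t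
          + (w + ∫⁻ y, u y ∂chainMeas κ x n) := by gcongr
      _ ≤ w + (n * w + u x) := by rw [add_left_comm]; gcongr
      _ = (n + 1 : ℕ) * w + u x := by push_cast; ring

end chainMeas

lemma ENNReal.limsup_inv_mul_le_of_le_mul_add {s : ℕ → ℝ≥0∞} {w a : ℝ≥0∞} (ha : a ≠ ⊤)
    (hs : ∀ n, s n ≤ n * w + a) :
    limsup (fun n : ℕ => (n : ℝ≥0∞)⁻¹ * s n) atTop ≤ w := by
  have hle : ∀ᶠ n : ℕ in atTop, (n : ℝ≥0∞)⁻¹ * s n ≤ w + (n : ℝ≥0∞)⁻¹ * a := by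
    filter_upwards [eventually_ne_atTop 0] with n hn
    calc (n : ℝ≥0∞)⁻¹ * s n ≤ (n : ℝ≥0∞)⁻¹ * (n * w + a) := by gcongr; exact hs n
      _ = w + (n : ℝ≥0∞)⁻¹ * a := by
        rw [mul_add, ← mul_assoc, ENNReal.inv_mul_cancel (by exact_mod_cast hn) (by simp),
          one_mul]
  have hlim : Tendsto (fun n : ℕ => w + (n : ℝ≥0∞)⁻¹ * a) atTop (𝓝 w) := by
    simpa using (ENNReal.Tendsto.mul_const ENNReal.tendsto_inv_nat_nhds_zero
      (.inr ha)).const_add w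
  exact (limsup_le_limsup hle).trans hlim.limsup_eq.le

/-- Let `κ` be a Markov kernel on `X`, `c u : X → [0,+∞]` measurable,
and `w ∈ [0,+∞]` with `c(x) + ∫ u dκ(x) ≤ w + u(x)` for all `x`. Fix `x`, and let
`μ_t` be the distribution at time `t` of the chain started at `x`. Then for all `n ≥ 1`,
`∑_{t<n} ∫ c dμ_t ≤ n·w + u(x)`; consequently, if `u(x) < +∞`, then
`limsup_n (1/n) ∑_{t<n} ∫ c dμ_t ≤ w`. -/
theorem statement12 {X : Type*} [MeasurableSpace X] (κ : Kernel X X)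
    [IsMarkovKernel κ] (c u : X → ℝ≥0∞) (hc : Measurable c) (hu : Measurable u)
    (w : ℝ≥0∞) (h : ∀ x : X, c x + ∫⁻ y, u y ∂ (κ x) ≤ w + u x) (x : X) :
    (∀ n : ℕ, 1 ≤ n →
      ∑ t ∈ Finset.range n, ∫⁻ y, c y ∂ (chainMeas κ x t) ≤ (n : ℝ≥0∞) * w + u x)
    ∧ (u x < ⊤ →
      Filter.limsup (fun n : ℕ =>
          ((n : ℝ≥0∞))⁻¹ * ∑ t ∈ Finset.range n, ∫⁻ y, c y ∂ (chainMeas κ x t)) atTop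
        ≤ w) := by
  have bound (n : ℕ) :
      ∑ t ∈ Finset.range n, ∫⁻ y, c y ∂chainMeas κ x t ≤ n * w + u x :=
    le_self_add.trans (chainMeas.sum_lintegral_add_lintegral_le κ x hc hu h n)
  exact ⟨fun n _ => bound n, fun hux => ENNReal.limsup_inv_mul_le_of_le_mul_add hux.ne bound⟩

end
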